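/- For r₀ ∈ (1/2, 1), ∫₀^{r₀} (-log r)^{-1/2} (1-r²)^{-1} dr ≤ C (1-r₀)^{-1/2} for an absolute constant C. -/

import Mathlib

/-!
Since `-log r ≥ 1 - r` and `1 - r² ≥ 1 - r` on `(0, 1)`, the integrand is dominated by
`(1 - r)^(-3/2)`, whose integral over `(0, r₀)` is `2 (1 - r₀)^(-1/2) - 2`.
-/

open Real MeasureTheory Set

lemma rpow_neg_log_le_rpow_one_sub {r s : ℝ} (hr₀ : 0 < r) (hr₁ : r < 1) (hs : s ≤ 0) :
    (-log r) ^ s ≤ (1 - r) ^ s :=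
  rpow_le_rpow_of_nonpos (by linarith) (by linarith [log_le_sub_one_of_pos hr₀]) hs

lemma rpow_neg_log_mul_inv_one_sub_sq_nonneg {r : ℝ} (hr₀ : 0 < r) (hr₁ : r < 1) :
    0 ≤ (-log r) ^ (-(1/2) : ℝ) * (1 - r ^ 2)⁻¹ :=
  mul_nonneg (rpow_nonneg (by linarith [log_nonpos hr₀.le hr₁.le]) _)
    (inv_nonneg.mpr (by nlinarith))

lemma rpow_neg_log_mul_inv_one_sub_sq_le {r : ℝ} (hr₀ : 0 < r) (hr₁ : r < 1) :
    (-log r) ^ (-(1/2) : ℝ) * (1 - r ^ 2)⁻¹ ≤ (1 - r) ^ (-(3/2) : ℝ) := by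
  have h : 0 < 1 - r := by linarith
  calc (-log r) ^ (-(1/2) : ℝ) * (1 - r ^ 2)⁻¹
      ≤ (1 - r) ^ (-(1/2) : ℝ) * (1 - r) ^ (-1 : ℝ) := by
        rw [rpow_neg_one]
        exact mul_le_mul (rpow_neg_log_le_rpow_one_sub hr₀ hr₁ (by norm_num))
          (inv_anti₀ h (by nlinarith)) (inv_nonneg.mpr (by nlinarith)) (rpow_nonneg h.le _)
    _ = (1 - r) ^ (-(3/2) : ℝ) := by rw [← rpow_add h]; norm_num

lemma intervalIntegrable_one_sub_rpow {b s : ℝ} (hb : b < 1) :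
    IntervalIntegrable (fun x ↦ (1 - x) ^ s) volume 0 b := by
  refine ContinuousOn.intervalIntegrable
    (ContinuousOn.rpow_const (by fun_prop) fun x hx ↦ Or.inl ?_)
  linarith [hx.2, max_lt zero_lt_one hb]

lemma integral_one_sub_rpow {b s : ℝ} (hb : b < 1) (hs : s ≠ -1) :
    ∫ x in (0 : ℝ)..b, (1 - x) ^ s = (1 - (1 - b) ^ (s + 1)) / (s + 1) := by
  rw [intervalIntegral.integral_comp_sub_left (fun x ↦ x ^ s), sub_zero,
    integral_rpow (Or.inr ⟨hs, fun h ↦ ?_⟩), one_rpow]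
  exact (lt_min (by linarith) one_pos).not_ge h.1

theorem log_weight_integral_bound :
    ∃ C : ℝ, 0 < C ∧ ∀ r₀ : ℝ, r₀ ∈ Set.Ioo (1/2 : ℝ) 1 →
      ∫ r in Set.Ioo (0:ℝ) r₀, (-Real.log r) ^ (-(1/2) : ℝ) * (1 - r^2)⁻¹
        ≤ C * (1 - r₀) ^ (-(1/2) : ℝ) := by
  refine ⟨2, two_pos, fun r₀ ⟨hr₀, hr₁⟩ ↦ ?_⟩
  have hmem : ∀ r ∈ Ioo 0 r₀, 0 < r ∧ r < 1 := fun r hr ↦ ⟨hr.1, hr.2.trans hr₁⟩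
  calc ∫ r in Ioo 0 r₀, (-log r) ^ (-(1/2) : ℝ) * (1 - r ^ 2)⁻¹
      ≤ ∫ r in Ioo 0 r₀, (1 - r) ^ (-(3/2) : ℝ) :=
        integral_mono_of_nonneg
          (ae_restrict_of_forall_mem measurableSet_Ioo fun r hr ↦
            rpow_neg_log_mul_inv_one_sub_sq_nonneg (hmem r hr).1 (hmem r hr).2)
          ((intervalIntegrable_one_sub_rpow hr₁).1.mono_set Ioo_subset_Ioc_self)
          (ae_restrict_of_forall_mem measurableSet_Ioo fun r hr ↦
            rpow_neg_log_mul_inv_one_sub_sq_le (hmem r hr).1 (hmem r hr).2)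
    _ = ∫ r in (0 : ℝ)..r₀, (1 - r) ^ (-(3/2) : ℝ) := by
        rw [intervalIntegral.integral_of_le (by linarith), integral_Ioc_eq_integral_Ioo]
    _ = 2 * (1 - r₀) ^ (-(1/2) : ℝ) - 2 := by
        rw [integral_one_sub_rpow hr₁ (by norm_num)]
        norm_num
        ring
    _ ≤ 2 * (1 - r₀) ^ (-(1/2) : ℝ) := by linarith
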